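/- arXiv:2203.08564 — 3 statements merged into one kernel-verified Lean document; each statement's English description precedes it below -/
import Mathlib

section
/- For a fixed λ > 0, the map A ↦ Tr((A + λI)⁻¹ A) is concave on the cone of symmetric positive semi-definite d×d matrices. -/
/-!
For positive definite `X`, `Tr X⁻¹ = max_V (2 Tr V - Tr (Vᵀ X V))`, the maximum being attained at
`V = X⁻¹` since the gap is `Tr ((V - X⁻¹)ᵀ X (V - X⁻¹)) ≥ 0`. As a supremum of affine functions of
`X`, `X ↦ Tr X⁻¹` is convex on positive definite matrices, and
`Tr ((A + λI)⁻¹ A) = d - λ Tr ((A + λI)⁻¹)` is therefore concave in `A`.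
-/

open Matrix

namespace Matrix

variable {n : Type*}

lemma PosDef.transpose_eq {X : Matrix n n ℝ} (hX : X.PosDef) : Xᵀ = X :=
  (isHermitian_iff_isSymm.mp hX.isHermitian).eq

lemma convex_setOf_posDef : Convex ℝ {X : Matrix n n ℝ | X.PosDef} := by
  intro X hX Y hY a b ha hb hab
  rcases ha.eq_or_lt with rfl | ha
  · simpa [show b = 1 by linarith] using hY
  · exact (hX.smul ha).add_posSemidef (hY.posSemidef.smul hb)

variable [Fintype n] [DecidableEq n]

lemma PosDef.two_mul_trace_sub_trace_transpose_mul_mul_le_trace_inv {X : Matrix n n ℝ}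
    (hX : X.PosDef) (V : Matrix n n ℝ) :
    2 * V.trace - (Vᵀ * X * V).trace ≤ X⁻¹.trace := by
  have hdet : IsUnit X.det := hX.isUnit.map detMonoidHom
  have hnonneg : 0 ≤ ((V - X⁻¹)ᵀ * X * (V - X⁻¹)).trace := by
    simpa using (hX.posSemidef.conjTranspose_mul_mul_same (V - X⁻¹)).trace_nonneg
  have hexpand : (V - X⁻¹)ᵀ * X * (V - X⁻¹) = Vᵀ * X * V - Vᵀ - V + X⁻¹ := by
    rw [transpose_sub, transpose_nonsing_inv, hX.transpose_eq]
    simp only [sub_mul, mul_sub, nonsing_inv_mul X hdet, Matrix.mul_assoc, mul_nonsing_inv X hdet,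
      Matrix.mul_one, Matrix.one_mul]
    abel
  rw [hexpand, trace_add, trace_sub, trace_sub, trace_transpose] at hnonneg
  linarith

lemma convexOn_trace_inv : ConvexOn ℝ {X : Matrix n n ℝ | X.PosDef} fun X => X⁻¹.trace := by
  refine ⟨convex_setOf_posDef, fun X hX Y hY a b ha hb hab => ?_⟩
  set Z := a • X + b • Y
  have hZ : Z.PosDef := convex_setOf_posDef hX hY ha hb hab
  have hZinv : Z⁻¹ᵀ * Z * Z⁻¹ = Z⁻¹ := by
    rw [transpose_nonsing_inv, hZ.transpose_eq, nonsing_inv_mul Z (hZ.isUnit.map detMonoidHom),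
      Matrix.one_mul]
  calc Z⁻¹.trace = 2 * Z⁻¹.trace - (Z⁻¹ᵀ * Z * Z⁻¹).trace := by rw [hZinv]; ring
    _ = a * (2 * Z⁻¹.trace - (Z⁻¹ᵀ * X * Z⁻¹).trace)
          + b * (2 * Z⁻¹.trace - (Z⁻¹ᵀ * Y * Z⁻¹).trace) := by
      simp only [Z, Matrix.mul_add, Matrix.add_mul, Matrix.mul_smul, Matrix.smul_mul, trace_add,
        trace_smul, smul_eq_mul]
      linear_combination (-2 * Z⁻¹.trace) * hab
    _ ≤ a * X⁻¹.trace + b * Y⁻¹.trace := by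
      gcongr
      exacts [hX.two_mul_trace_sub_trace_transpose_mul_mul_le_trace_inv _,
        hY.two_mul_trace_sub_trace_transpose_mul_mul_le_trace_inv _]

lemma trace_inv_mul_sub_smul_one {M : Matrix n n ℝ} (hM : IsUnit M.det) (l : ℝ) :
    (M⁻¹ * (M - l • 1)).trace = Fintype.card n - l * M⁻¹.trace := by
  rw [Matrix.mul_sub, nonsing_inv_mul M hM, Matrix.mul_smul, Matrix.mul_one, trace_sub, trace_smul,
    trace_one, smul_eq_mul]

lemma concaveOn_trace_inv_add_smul_one_mul {l : ℝ} (hl : 0 < l) :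
    ConcaveOn ℝ {A : Matrix n n ℝ | A.PosSemidef} fun A => ((A + l • 1)⁻¹ * A).trace := by
  have hshift {A : Matrix n n ℝ} (hA : A.PosSemidef) : (A + l • 1).PosDef :=
    PosDef.posSemidef_add hA (PosDef.one.smul hl)
  have htrace {A : Matrix n n ℝ} (hA : A.PosSemidef) :
      ((A + l • 1)⁻¹ * A).trace = Fintype.card n - l * (A + l • 1)⁻¹.trace := by
    simpa using trace_inv_mul_sub_smul_one ((hshift hA).isUnit.map detMonoidHom) l
  refine ⟨fun A hA B hB a b ha hb _ => (hA.smul ha).add (hB.smul hb),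
    fun A hA B hB a b ha hb hab => ?_⟩
  have hcomb : a • A + b • B + l • 1 = a • (A + l • 1) + b • (B + l • 1) := by
    rw [smul_add, smul_add, add_add_add_comm, ← add_smul, hab, one_smul]
  have hconv := convexOn_trace_inv.2 (hshift hA) (hshift hB) ha hb hab
  simp only [smul_eq_mul, ← hcomb] at hconv ⊢
  rw [htrace hA, htrace hB, htrace ((hA.smul ha).add (hB.smul hb))]
  nlinarith [mul_le_mul_of_nonneg_left hconv hl.le]

end Matrix

theorem trace_reg_inv_mul_concave {d : ℕ} (l : ℝ) (hl : 0 < l)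
    (A B : Matrix (Fin d) (Fin d) ℝ) (hA : A.PosSemidef) (hB : B.PosSemidef)
    (t : ℝ) (ht0 : 0 ≤ t) (ht1 : t ≤ 1) :
    (1 - t) * ((A + l • (1 : Matrix (Fin d) (Fin d) ℝ))⁻¹ * A).trace
        + t * ((B + l • (1 : Matrix (Fin d) (Fin d) ℝ))⁻¹ * B).trace
      ≤ ((((1 - t) • A + t • B) + l • (1 : Matrix (Fin d) (Fin d) ℝ))⁻¹
          * ((1 - t) • A + t • B)).trace :=
  (concaveOn_trace_inv_add_smul_one_mul hl).2 hA hB (sub_nonneg.mpr ht1) ht0 (sub_add_cancel 1 t)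
end

section
/- If Σ is a symmetric positive semi-definite d×d matrix with Tr(Σ^{1/b}) ≤ B for some b > 1 and B > 0, then for all λ ∈ (0, 1], Tr((Σ + λI)⁻¹ Σ) ≤ 2 B λ^{-1/b}. -/
open Matrix

theorem effective_dimension_poly_decay {d : ℕ} (Sig : Matrix (Fin d) (Fin d) ℝ)
    (hSig : Sig.PosSemidef) (b B : ℝ) (hb : 1 < b) (hB : 0 < B)
    (htr : ∑ i, (hSig.1.eigenvalues i) ^ (1 / b : ℝ) ≤ B)
    (l : ℝ) (hl0 : 0 < l) (hl1 : l ≤ 1) :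
    ((Sig + l • (1 : Matrix (Fin d) (Fin d) ℝ))⁻¹ * Sig).trace
      ≤ 2 * B * l ^ (-(1 / b) : ℝ) := by
  have hA := hSig.1
  set μ : Fin d → ℝ := hA.eigenvalues with hμdef
  have hμ : ∀ i, 0 ≤ μ i := fun i => hSig.eigenvalues_nonneg i
  set U : Matrix (Fin d) (Fin d) ℝ := (hA.eigenvectorUnitary : Matrix (Fin d) (Fin d) ℝ)
    with hUdef
  have hUU : star U * U = 1 := Unitary.coe_star_mul_self _
  have hUU' : U * star U = 1 := Unitary.coe_mul_star_self _
  have hmul : ∀ X Y : Matrix (Fin d) (Fin d) ℝ,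
      (U * X * star U) * (U * Y * star U) = U * (X * Y) * star U := by
    intro X Y
    simp only [mul_assoc]
    rw [← mul_assoc (star U), hUU, one_mul]
  have hSpec : Sig = U * diagonal μ * star U := by
    have := hA.spectral_theorem
    simpa using this
  have hpos : ∀ i, 0 < μ i + l := fun i => add_pos_of_nonneg_of_pos (hμ i) hl0
  have hAdd : Sig + l • (1 : Matrix (Fin d) (Fin d) ℝ)
      = U * diagonal (fun i => μ i + l) * star U := by
    have h1 : (diagonal (fun i => μ i + l) : Matrix (Fin d) (Fin d) ℝ)
        = diagonal μ + l • 1 := by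
      rw [smul_one_eq_diagonal, ← diagonal_add]
    rw [h1, mul_add, add_mul, ← hSpec, mul_smul_comm, mul_one, smul_mul_assoc, hUU']
  have hInv : (Sig + l • (1 : Matrix (Fin d) (Fin d) ℝ))⁻¹
      = U * diagonal (fun i => (μ i + l)⁻¹) * star U := by
    apply inv_eq_right_inv
    rw [hAdd, hmul, diagonal_mul_diagonal]
    have : (fun i => (μ i + l) * (μ i + l)⁻¹) = fun _ => (1 : ℝ) := by
      funext i; exact mul_inv_cancel₀ (hpos i).ne'
    rw [this, diagonal_one, mul_one, hUU']
  have hProd : (Sig + l • (1 : Matrix (Fin d) (Fin d) ℝ))⁻¹ * Sig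
      = U * diagonal (fun i => (μ i + l)⁻¹ * μ i) * star U := by
    rw [hInv]
    conv_lhs => rw [hSpec]
    rw [hmul, diagonal_mul_diagonal]
  have hTr : ((Sig + l • (1 : Matrix (Fin d) (Fin d) ℝ))⁻¹ * Sig).trace
      = ∑ i, (μ i + l)⁻¹ * μ i := by
    rw [hProd, trace_mul_cycle, hUU, one_mul, trace_diagonal]
  rw [hTr]
  have key : ∀ i, (μ i + l)⁻¹ * μ i ≤ μ i ^ (1 / b : ℝ) * l ^ (-(1 / b) : ℝ) := by
    intro i
    have hbpos : (0 : ℝ) < 1 / b := by positivity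
    have hb1 : (1 / b : ℝ) ≤ 1 := by
      rw [div_le_one (by linarith)]; linarith
    have hrw : μ i ^ (1 / b : ℝ) * l ^ (-(1 / b) : ℝ) = (μ i / l) ^ (1 / b : ℝ) := by
      rw [Real.div_rpow (hμ i) hl0.le, Real.rpow_neg hl0.le]; ring
    rw [hrw]
    rcases eq_or_lt_of_le (hμ i) with h0 | h0
    · rw [← h0]
      simp only [mul_zero, zero_div]
      positivity
    rcases le_or_gt (μ i) l with hle | hlt
    · have h1 : (μ i + l)⁻¹ * μ i ≤ μ i / l := by
        rw [div_eq_inv_mul]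
        gcongr <;> linarith [hμ i]
      refine h1.trans ?_
      have hx0 : 0 < μ i / l := div_pos h0 hl0
      have hx1 : μ i / l ≤ 1 := (div_le_one hl0).2 hle
      calc μ i / l = (μ i / l) ^ (1 : ℝ) := (Real.rpow_one _).symm
        _ ≤ (μ i / l) ^ (1 / b : ℝ) := Real.rpow_le_rpow_of_exponent_ge hx0 hx1 hb1
    · have h1 : (μ i + l)⁻¹ * μ i ≤ 1 := by
        rw [inv_mul_le_iff₀ (hpos i), mul_one]
        linarith
      refine h1.trans ?_
      exact Real.one_le_rpow ((one_le_div hl0).2 hlt.le) hbpos.le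
  calc ∑ i, (μ i + l)⁻¹ * μ i ≤ ∑ i, μ i ^ (1 / b : ℝ) * l ^ (-(1 / b) : ℝ) :=
        Finset.sum_le_sum fun i _ => key i
    _ = (∑ i, μ i ^ (1 / b : ℝ)) * l ^ (-(1 / b) : ℝ) := by rw [Finset.sum_mul]
    _ ≤ B * l ^ (-(1 / b) : ℝ) := by
        gcongr
    _ ≤ 2 * B * l ^ (-(1 / b) : ℝ) := by
        have : (0:ℝ) ≤ l ^ (-(1 / b) : ℝ) := by positivity
        nlinarith
end

section
/- Let S be symmetric positive-definite and v ∈ R^d with ⟨S⁻¹v, v⟩ ≤ c. Then S⁻¹ v vᵀ S⁻¹ ⪯ (1 + c)² (S + vvᵀ)⁻¹ v vᵀ (S + vvᵀ)⁻¹. -/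
/-!
With `w = S⁻¹ v` and `t = ⟨v, w⟩` one has `(S + v vᵀ) w = (1 + t) v`, so `(S + v vᵀ)⁻¹ v = w / (1 + t)`.
Both sides are therefore multiples of `w wᵀ`, and the difference is `((1 + c)² / (1 + t)² - 1) w wᵀ`,
which is positive semidefinite because `0 ≤ t ≤ c`.
-/

open Matrix

namespace Matrix

variable {n : Type*} [Fintype n]

theorem IsSymm.mul_vecMulVec_mul {R : Type*} [CommSemiring R] {M : Matrix n n R}
    (hM : M.IsSymm) (u : n → R) :
    M * vecMulVec u u * M = vecMulVec (M *ᵥ u) (M *ᵥ u) := by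
  rw [mul_vecMulVec, vecMulVec_mul, ← mulVec_transpose, hM.eq]

variable [DecidableEq n]

theorem add_vecMulVec_mulVec_inv_mulVec {K : Type*} [CommRing K] {S : Matrix n n K}
    (hS : IsUnit S.det) (u v : n → K) :
    (S + vecMulVec u v) *ᵥ (S⁻¹ *ᵥ u) = (1 + v ⬝ᵥ (S⁻¹ *ᵥ u)) • u := by
  rw [add_mulVec, mulVec_mulVec, mul_nonsing_inv _ hS, one_mulVec, vecMulVec_mulVec,
    op_smul_eq_smul, add_smul, one_smul]

theorem inv_add_vecMulVec_mulVec {K : Type*} [Field K] {S : Matrix n n K}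
    (hS : IsUnit S.det) {u v : n → K} (hA : IsUnit (S + vecMulVec u v).det) :
    (S + vecMulVec u v)⁻¹ *ᵥ u = (1 + v ⬝ᵥ (S⁻¹ *ᵥ u))⁻¹ • (S⁻¹ *ᵥ u) := by
  set a := 1 + v ⬝ᵥ (S⁻¹ *ᵥ u) with ha_def
  have hw : S⁻¹ *ᵥ u = a • ((S + vecMulVec u v)⁻¹ *ᵥ u) := by
    rw [← mulVec_smul, ← add_vecMulVec_mulVec_inv_mulVec hS, mulVec_mulVec,
      nonsing_inv_mul _ hA, one_mulVec]
  have ha : a ≠ 0 := by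
    -- `a = 0` would force `S⁻¹ u = 0`, hence `a = 1`
    intro ha
    rw [ha, zero_smul] at hw
    simp [ha_def, hw] at ha
  rw [hw, smul_smul, inv_mul_cancel₀ ha, one_smul]

end Matrix

theorem rank_one_perturb_loewner_general {d : ℕ} (S : Matrix (Fin d) (Fin d) ℝ) (hS : S.PosDef)
    (v : Fin d → ℝ) (c : ℝ) (hvc : v ⬝ᵥ (S⁻¹ *ᵥ v) ≤ c) :
    ((1 + c) ^ 2 • ((S + vecMulVec v v)⁻¹ * vecMulVec v v * (S + vecMulVec v v)⁻¹)
      - S⁻¹ * vecMulVec v v * S⁻¹).PosSemidef := by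
  set w := S⁻¹ *ᵥ v
  have hA : (S + vecMulVec v v).PosDef :=
    hS.add_posSemidef (by simpa using posSemidef_vecMulVec_self_star v)
  have ht : 0 ≤ v ⬝ᵥ w := by simpa using hS.inv.posSemidef.dotProduct_mulVec_nonneg v
  have hAv : (S + vecMulVec v v)⁻¹ *ᵥ v = (1 + v ⬝ᵥ w)⁻¹ • w :=
    inv_add_vecMulVec_mulVec (S.isUnit_iff_isUnit_det.mp hS.isUnit)
      ((S + vecMulVec v v).isUnit_iff_isUnit_det.mp hA.isUnit)
  have hcoeff : 1 ≤ (1 + c) ^ 2 * (1 + v ⬝ᵥ w)⁻¹ * (1 + v ⬝ᵥ w)⁻¹ := by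
    rw [mul_assoc, ← mul_inv, ← sq, ← div_eq_mul_inv, one_le_div (by positivity)]
    gcongr
  rw [IsSymm.mul_vecMulVec_mul (isHermitian_iff_isSymm.mp hA.isHermitian.inv),
    IsSymm.mul_vecMulVec_mul (isHermitian_iff_isSymm.mp hS.isHermitian.inv), hAv,
    smul_vecMulVec, vecMulVec_smul, smul_smul, smul_smul]
  nth_rw 2 [← one_smul ℝ (vecMulVec w w)]
  rw [← sub_smul]
  exact (posSemidef_vecMulVec_self_star w).smul (sub_nonneg.mpr hcoeff)

theorem rank_one_perturb_loewner {d : ℕ} (S : Matrix (Fin d) (Fin d) ℝ) (hS : S.PosDef)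
    (v : Fin d → ℝ) (c : ℝ) (hc : 0 ≤ c) (hvc : v ⬝ᵥ (S⁻¹ *ᵥ v) ≤ c) :
    ((1 + c) ^ 2 • ((S + vecMulVec v v)⁻¹ * vecMulVec v v * (S + vecMulVec v v)⁻¹)
      - S⁻¹ * vecMulVec v v * S⁻¹).PosSemidef :=
  rank_one_perturb_loewner_general S hS v c hvc
end
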